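/- Let R₂ be as defined, and let x = 2⌊φn⌋+2, y = 2⌊φ²n⌋+2 for some n ≥ 1. Then exactly one diagonal option of (x,y) belongs to R₂: there is exactly one i with 0 < i ≤ x such that (x−i, y−i) ∈ R₂. -/

import Mathlib

noncomputable def goldenPhi : ℝ := (1 + Real.sqrt 5) / 2

/-- The candidate set of P-positions of Blocking-2 Wythoff Nim. -/
def R2 : Set (ℕ × ℕ) :=
  {(0, 0)} ∪
  {p | ∃ n : ℕ, p = (n, 2 * n + 1) ∨ p = (2 * n + 1, n)} ∪
  {p | ∃ n : ℕ, p = (2 * ⌊goldenPhi * n⌋₊ + 2, 2 * ⌊goldenPhi ^ 2 * n⌋₊ + 2) ∨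
                p = (2 * ⌊goldenPhi ^ 2 * n⌋₊ + 2, 2 * ⌊goldenPhi * n⌋₊ + 2)}

/-!
Write `A n = ⌊φn⌋` and `B n = ⌊φ²n⌋`. Since `φ² = φ + 1`, `B n = A n + n`, so the position
`(2 A n + 2, 2 B n + 2)` lies on the diagonal line `y = x + 2n`, and so do all its diagonal
options. On that line `R₂` has exactly two points: the position itself and `(2n - 1, 4n - 1)`,
which is a diagonal option because `A n ≥ n`.
-/

lemma goldenPhi_eq_goldenRatio : goldenPhi = Real.goldenRatio := rfl

lemma floor_goldenPhi_sq_mul (n : ℕ) : ⌊goldenPhi ^ 2 * n⌋₊ = ⌊goldenPhi * n⌋₊ + n := by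
  rw [goldenPhi_eq_goldenRatio, Real.goldenRatio_sq, add_one_mul]
  exact Nat.floor_add_natCast (by positivity) n

lemma le_floor_goldenPhi_mul (n : ℕ) : n ≤ ⌊goldenPhi * n⌋₊ :=
  Nat.le_floor <| le_mul_of_one_le_left (n.cast_nonneg : (0 : ℝ) ≤ n) Real.one_lt_goldenRatio.le

lemma mk_add_two_mul_mem_R2_iff {n : ℕ} (hn : 1 ≤ n) (x : ℕ) :
    (x, x + 2 * n) ∈ R2 ↔ x + 1 = 2 * n ∨ x = 2 * ⌊goldenPhi * n⌋₊ + 2 := by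
  constructor
  · rintro ((h | ⟨m, h | h⟩) | ⟨m, h | h⟩) <;>
      simp only [Set.mem_singleton_iff, Prod.ext_iff, floor_goldenPhi_sq_mul] at h
    · omega
    · omega
    · omega
    · obtain rfl : m = n := by omega
      exact Or.inr h.1
    · omega
  · rintro (h | h)
    · exact Or.inl (Or.inr ⟨x, Or.inl (by ext <;> simp only; omega)⟩)
    · refine Or.inr ⟨n, Or.inl ?_⟩
      rw [floor_goldenPhi_sq_mul, h]
      ext <;> simp only; ring

/-- For x = 2⌊φn⌋+2, y = 2⌊φ²n⌋+2 with n ≥ 1, exactly one diagonal option of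
(x,y) belongs to R₂. -/
theorem R2_diagonal_unique :
    ∀ n : ℕ, 1 ≤ n →
      ∃! i : ℕ, 0 < i ∧ i ≤ 2 * ⌊goldenPhi * n⌋₊ + 2 ∧
        (2 * ⌊goldenPhi * n⌋₊ + 2 - i, 2 * ⌊goldenPhi ^ 2 * n⌋₊ + 2 - i) ∈ R2 := by
  intro n hn
  rw [floor_goldenPhi_sq_mul]
  have han := le_floor_goldenPhi_mul n
  set x := 2 * ⌊goldenPhi * n⌋₊ + 2
  have mem_iff (i : ℕ) (hi : i ≤ x) :
      (x - i, 2 * (⌊goldenPhi * n⌋₊ + n) + 2 - i) ∈ R2 ↔ x - i + 1 = 2 * n ∨ x - i = x := by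
    rw [show 2 * (⌊goldenPhi * n⌋₊ + n) + 2 - i = x - i + 2 * n by omega]
    exact mk_add_two_mul_mem_R2_iff hn (x - i)
  refine ⟨x + 1 - 2 * n, ⟨by omega, by omega, (mem_iff _ (by omega)).2 (Or.inl (by omega))⟩, ?_⟩
  rintro i ⟨hi0, hix, hi⟩
  rcases (mem_iff i hix).1 hi with h | h <;> omega
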